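/- The 3-cosystole of the sporadic regular matroid R₁₀ equals 6/5: sys₃*(R₁₀) = 6/5. In particular, R₁₀ has five cocircuits of size four such that every element of the ground set lies in exactly two of them and any three of the five satisfy the non-inclusion property. -/

import Mathlib

open Set

variable {α : Type*}

/-- A circuit of a matroid: a minimal dependent set. -/
def Matroid.Circuit (M : Matroid α) (C : Set α) : Prop :=
  M.Dep C ∧ ∀ ⦃D⦄, M.Dep D → D ⊆ C → D = C

/-- A cocircuit: a circuit of the dual matroid. -/
def Matroid.Cocircuit (M : Matroid α) (C : Set α) : Prop :=
  M✶.Circuit C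

/-- A coloop: a loop of the dual matroid. -/
def Matroid.Coloop (M : Matroid α) (e : α) : Prop :=
  M✶.Dep {e}

/-- A loop: an element whose singleton is dependent. -/
def Matroid.Loop (M : Matroid α) (e : α) : Prop :=
  M.Dep {e}

/-- Deletion of a set of elements. -/
def Matroid.delete' (M : Matroid α) (D : Set α) : Matroid α :=
  M.restrict (M.E \ D)

/-- Contraction of a set of elements, via duality. -/
def Matroid.contract' (M : Matroid α) (C : Set α) : Matroid α :=
  (M✶.delete' C)✶

/-- The total `μ`-weight of a set. -/
noncomputable def wt (μ : α → ℝ) (X : Set α) : ℝ := ∑ᶠ x ∈ X, μ x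

/-- The non-inclusion property for a triple of sets. -/
def NonIncl (C₁ C₂ C₃ : Set α) : Prop :=
  ¬ C₁ ⊆ C₂ ∪ C₃ ∧ ¬ C₂ ⊆ C₁ ∪ C₃ ∧ ¬ C₃ ⊆ C₁ ∪ C₂

/-- `μ` is a probability distribution on the ground set of `M`. -/
def Matroid.IsProb (M : Matroid α) (μ : α → ℝ) : Prop :=
  (∀ e, 0 ≤ μ e) ∧ (∀ e ∉ M.E, μ e = 0) ∧ wt μ M.E = 1

/-- The weighted 3-cosystole: the minimum total weight of a triple of cocircuits
with the non-inclusion property. -/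
noncomputable def Matroid.sys3wt (M : Matroid α) (μ : α → ℝ) : ℝ :=
  sInf {s | ∃ C₁ C₂ C₃, M.Cocircuit C₁ ∧ M.Cocircuit C₂ ∧ M.Cocircuit C₃ ∧
    NonIncl C₁ C₂ C₃ ∧ s = wt μ C₁ + wt μ C₂ + wt μ C₃}

/-- The 3-cosystole: the maximum of the weighted 3-cosystole over probability
distributions on the ground set. -/
noncomputable def Matroid.sys3 (M : Matroid α) : ℝ :=
  sSup {t | ∃ μ, M.IsProb μ ∧ t = M.sys3wt μ}

/-- The standard `GF(2)` representation of the sporadic regular matroid `R₁₀`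
(rows `v₁,…,v₅`, columns `f₂,…,f₁₁` of the matrix `A₁₂` in the paper). -/
def R10matrix : Fin 5 → Fin 10 → ZMod 2 :=
  ![![1, 0, 0, 0, 0, 1, 1, 0, 0, 1],
    ![0, 1, 0, 0, 0, 1, 1, 1, 0, 0],
    ![0, 0, 1, 0, 0, 0, 1, 1, 1, 0],
    ![0, 0, 0, 1, 0, 0, 0, 1, 1, 1],
    ![0, 0, 0, 0, 1, 1, 0, 0, 1, 1]]

namespace R10aux

def col (j : Fin 10) : Fin 5 → ZMod 2 := fun i => R10matrix i j

/-- 19 bases of R₁₀ whose complements cover all 3-subsets. -/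
def W : Fin 19 → Fin 5 → Fin 10 :=
  ![![0,1,2,3,4], ![0,1,5,6,7], ![0,3,5,8,9], ![1,2,7,8,9], ![3,4,6,7,8],
    ![0,2,4,6,9], ![1,2,3,5,6], ![1,4,5,7,9], ![2,4,5,7,8], ![0,1,3,6,9],
    ![0,2,3,5,7], ![0,1,4,6,8], ![2,5,6,8,9], ![1,3,4,8,9], ![0,2,3,6,8],
    ![2,3,4,7,9], ![0,3,4,5,7], ![0,4,5,8,9], ![1,3,5,6,7]]

/-- The defining covectors of the five special cocircuits. -/
def U : Fin 5 → Fin 5 → ZMod 2 :=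
  ![![1,1,0,0,0], ![0,1,1,0,0], ![0,0,1,1,0], ![0,0,0,1,1], ![1,0,0,0,1]]

/-- The five special cocircuits. -/
def Cfin : Fin 5 → Finset (Fin 10) :=
  ![{0,1,7,9}, {1,2,5,8}, {2,3,6,9}, {3,4,5,7}, {0,4,6,8}]

theorem d1 : ∀ k : Fin 19, ∀ g : Fin 5 → ZMod 2,
    (∑ i, g i • col (W k i)) = 0 → ∀ i, g i = 0 := by decide
theorem d2 : ∀ k : Fin 19, Function.Injective (W k) := by decide
theorem d3 : ∀ x y z : Fin 10, ∃ k, ∀ i, W k i ≠ x ∧ W k i ≠ y ∧ W k i ≠ z := by decide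
theorem d4 : ∀ i : Fin 5, U i ≠ 0 := by decide
theorem d5 : ∀ i : Fin 5, ∀ j : Fin 10, j ∉ Cfin i → ∑ k, U i k * col j k = 0 := by decide
theorem d6 : ∀ i j k : Fin 5, i ≠ j → i ≠ k → j ≠ k → ¬ (Cfin i ⊆ Cfin j ∪ Cfin k) := by decide
theorem d7 : ∀ i, (Cfin i).card = 4 := by decide
theorem d8 : ∀ e : Fin 10, (Finset.univ.filter fun i => e ∈ Cfin i).card = 2 := by decide

theorem finrank5 : Module.finrank (ZMod 2) (Fin 5 → ZMod 2) = 5 := by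
  simp [Module.finrank_pi]

/-- Any linearly independent family of columns has at most 5 elements. -/
theorem card_le_five {S : Set (Fin 10)}
    (hli : LinearIndependent (ZMod 2) fun e : S => col (e : Fin 10)) : S.ncard ≤ 5 := by
  haveI : Fintype S := (Set.toFinite S).fintype
  have h := hli.fintype_card_le_finrank
  rw [finrank5] at h
  rwa [← Nat.card_coe_set_eq, Nat.card_eq_fintype_card]

/-- Columns lying in a hyperplane: at most 4 independent ones. -/
theorem card_le_four {S : Set (Fin 10)} {u : Fin 5 → ZMod 2} (hu : u ≠ 0)
    (horth : ∀ j ∈ S, ∑ k, u k * col j k = 0)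
    (hli : LinearIndependent (ZMod 2) fun e : S => col (e : Fin 10)) : S.ncard ≤ 4 := by
  classical
  set φ : (Fin 5 → ZMod 2) →ₗ[ZMod 2] ZMod 2 :=
    ∑ k, u k • LinearMap.proj k with hφdef
  have hφ : ∀ v, φ v = ∑ k, u k * v k := by
    intro v
    simp [hφdef, LinearMap.sum_apply, LinearMap.smul_apply]
  rw [Function.ne_iff] at hu
  obtain ⟨j, hj⟩ := hu
  have hv : φ (Pi.single j 1) = u j := by
    rw [hφ]
    simp [Pi.single_apply, mul_ite, Finset.sum_ite_eq']
  have hsurj : Function.Surjective φ := by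
    intro c
    rcases (show ∀ x : ZMod 2, x = 0 ∨ x = 1 by decide) c with rfl | rfl
    · exact ⟨0, map_zero φ⟩
    · exact ⟨Pi.single j 1, by
        rw [hv]; exact (show ∀ x : ZMod 2, x ≠ 0 → x = 1 by decide) _ hj⟩
  have hker : Module.finrank (ZMod 2) (LinearMap.ker φ) = 4 := by
    have h := LinearMap.finrank_range_add_finrank_ker φ
    rw [LinearMap.range_eq_top.2 hsurj, finrank_top, Module.finrank_self, finrank5] at h
    omega
  have hmem : ∀ e : S, col (e : Fin 10) ∈ LinearMap.ker φ := by
    intro e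
    rw [LinearMap.mem_ker, hφ]
    exact horth _ e.2
  have hli' : LinearIndependent (ZMod 2)
      (fun e : S => (⟨col (e : Fin 10), hmem e⟩ : LinearMap.ker φ)) :=
    LinearIndependent.of_comp (LinearMap.ker φ).subtype hli
  haveI : Fintype S := (Set.toFinite S).fintype
  have h := hli'.fintype_card_le_finrank
  rw [hker] at h
  rwa [← Nat.card_coe_set_eq, Nat.card_eq_fintype_card]

end R10aux
namespace R10aux

theorem ncardW (k : Fin 19) : (Set.range (W k)).ncard = 5 := by
  rw [← Nat.card_coe_set_eq, Nat.card_range_of_injective (d2 k)]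
  simp

variable {M : Matroid (Fin 10)}

section

variable (hE : M.E = Set.univ)
  (hIndep : ∀ I : Set (Fin 10), M.Indep I ↔ LinearIndependent (ZMod 2)
      (fun e : I => fun i : Fin 5 => R10matrix i (e : Fin 10)))

include hIndep

theorem indep_ncard_le {I : Set (Fin 10)} (hI : M.Indep I) : I.ncard ≤ 5 :=
  card_le_five ((hIndep I).1 hI)

theorem baseW (k : Fin 19) : M.IsBase (Set.range (W k)) := by
  have hli : LinearIndependent (ZMod 2) (col ∘ W k) := by
    rw [Fintype.linearIndependent_iff]
    intro g hg i
    exact d1 k g hg i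
  have hli2 : LinearIndependent (ZMod 2)
      (fun e : (Set.range (W k)) => col (e : Fin 10)) := by
    have h2 := hli.comp _ (Equiv.ofInjective (W k) (d2 k)).symm.injective
    have he : (fun e : (Set.range (W k)) => col (e : Fin 10)) =
        (col ∘ W k) ∘ (Equiv.ofInjective (W k) (d2 k)).symm := by
      funext x
      simp [Function.comp, Equiv.apply_ofInjective_symm]
    rwa [he]
  have hIdp : M.Indep (Set.range (W k)) := (hIndep _).2 hli2
  rw [Matroid.isBase_iff_maximal_indep]
  refine ⟨hIdp, fun I hI hBI => ?_⟩
  exact le_of_eq (Set.eq_of_subset_of_ncard_le hBI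
    (by rw [ncardW k]; exact indep_ncard_le hIndep hI) (Set.toFinite I)).symm

include hE

theorem coindep3 {I : Set (Fin 10)} (hI : I.ncard ≤ 3) : M✶.Indep I := by
  classical
  have hfin := I.toFinite
  have hc : hfin.toFinset.card ≤ 3 := by
    rwa [← Set.ncard_eq_toFinset_card I hfin]
  obtain ⟨t, ht0, htc⟩ := Finset.exists_superset_card_eq hc (by norm_num)
  rw [Finset.card_eq_three] at htc
  obtain ⟨x, y, z, -, -, -, rfl⟩ := htc
  obtain ⟨k, hk⟩ := d3 x y z
  rw [Matroid.dual_indep_iff_exists']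
  refine ⟨by rw [hE]; exact Set.subset_univ _, Set.range (W k), baseW hIndep k, ?_⟩
  rw [Set.disjoint_left]
  rintro a ha ⟨i, rfl⟩
  have : W k i ∈ ({x, y, z} : Finset (Fin 10)) := ht0 (by rwa [Set.Finite.mem_toFinset])
  rcases Finset.mem_insert.1 this with h | h
  · exact (hk i).1 h
  rcases Finset.mem_insert.1 h with h | h
  · exact (hk i).2.1 h
  · exact (hk i).2.2 (Finset.mem_singleton.1 h)

theorem depC (i : Fin 5) : M✶.Dep ↑(Cfin i) := by
  rw [Matroid.dep_iff]
  constructor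
  · intro h
    rw [Matroid.dual_indep_iff_exists'] at h
    obtain ⟨-, B, hB, hdisj⟩ := h
    have hli := (hIndep B).1 hB.indep
    have hcard : B.ncard = 5 := by
      have h5 := hB.encard_eq_encard_of_isBase (baseW hIndep 0)
      have h6 : B.ncard = (Set.range (W 0)).ncard := by
        rw [Set.ncard_def, h5, ← Set.ncard_def]
      rwa [ncardW 0] at h6
    have hle : B.ncard ≤ 4 := by
      refine card_le_four (d4 i) (fun j hj => d5 i j ?_) hli
      exact fun hmem => (Set.disjoint_right.1 hdisj hj) hmem
    omega
  · rw [Matroid.dual_ground, hE]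
    exact Set.subset_univ _

theorem cocircC (i : Fin 5) : M.Cocircuit ↑(Cfin i) := by
  refine ⟨depC hE hIndep i, fun D hD hsub => ?_⟩
  by_contra hne
  have hss : D ⊂ ↑(Cfin i) := ssubset_of_ne_of_subset hne hsub
  have hlt : D.ncard < (↑(Cfin i) : Set (Fin 10)).ncard :=
    Set.ncard_lt_ncard hss (Set.toFinite _)
  rw [Set.ncard_coe_finset, d7 i] at hlt
  exact hD.1 (coindep3 hE hIndep (by omega))

theorem cocirc_ncard {C : Set (Fin 10)} (hC : M.Cocircuit C) : 4 ≤ C.ncard := by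
  by_contra h
  exact hC.1.1 (coindep3 hE hIndep (by omega))

end

end R10aux
namespace R10aux

theorem wt_coe (μ : Fin 10 → ℝ) (s : Finset (Fin 10)) : wt μ ↑s = ∑ j ∈ s, μ j :=
  finsum_mem_coe_finset μ s

theorem wt_set (μ : Fin 10 → ℝ) (X : Set (Fin 10)) :
    wt μ X = ∑ j ∈ X.toFinite.toFinset, μ j := by
  conv_lhs => rw [← X.toFinite.coe_toFinset]
  exact wt_coe μ _

theorem wt_nonneg {μ : Fin 10 → ℝ} (hμ : ∀ e, 0 ≤ μ e) (X : Set (Fin 10)) : 0 ≤ wt μ X := by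
  rw [wt_set]; exact Finset.sum_nonneg fun _ _ => hμ _

theorem wt_uniform (X : Set (Fin 10)) :
    wt (fun _ => (1:ℝ)/10) X = X.ncard / 10 := by
  rw [wt_set, Finset.sum_const, Set.ncard_eq_toFinset_card X X.toFinite, nsmul_eq_mul]
  ring

theorem wt_univ (μ : Fin 10 → ℝ) :
    wt μ Set.univ = μ 0 + μ 1 + μ 2 + μ 3 + μ 4 + μ 5 + μ 6 + μ 7 + μ 8 + μ 9 := by
  rw [← Finset.coe_univ, wt_coe,
    show (Finset.univ : Finset (Fin 10)) = {0,1,2,3,4,5,6,7,8,9} by decide]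
  repeat rw [Finset.sum_insert (by decide)]
  rw [Finset.sum_singleton]; ring

theorem wtC0 (μ : Fin 10 → ℝ) : wt μ ↑(Cfin 0) = μ 0 + μ 1 + μ 7 + μ 9 := by
  show wt μ ↑({0,1,7,9} : Finset (Fin 10)) = _
  rw [wt_coe]
  repeat rw [Finset.sum_insert (by decide)]
  rw [Finset.sum_singleton]; ring

theorem wtC1 (μ : Fin 10 → ℝ) : wt μ ↑(Cfin 1) = μ 1 + μ 2 + μ 5 + μ 8 := by
  show wt μ ↑({1,2,5,8} : Finset (Fin 10)) = _
  rw [wt_coe]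
  repeat rw [Finset.sum_insert (by decide)]
  rw [Finset.sum_singleton]; ring

theorem wtC2 (μ : Fin 10 → ℝ) : wt μ ↑(Cfin 2) = μ 2 + μ 3 + μ 6 + μ 9 := by
  show wt μ ↑({2,3,6,9} : Finset (Fin 10)) = _
  rw [wt_coe]
  repeat rw [Finset.sum_insert (by decide)]
  rw [Finset.sum_singleton]; ring

theorem wtC3 (μ : Fin 10 → ℝ) : wt μ ↑(Cfin 3) = μ 3 + μ 4 + μ 5 + μ 7 := by
  show wt μ ↑({3,4,5,7} : Finset (Fin 10)) = _
  rw [wt_coe]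
  repeat rw [Finset.sum_insert (by decide)]
  rw [Finset.sum_singleton]; ring

theorem wtC4 (μ : Fin 10 → ℝ) : wt μ ↑(Cfin 4) = μ 0 + μ 4 + μ 6 + μ 8 := by
  show wt μ ↑({0,4,6,8} : Finset (Fin 10)) = _
  rw [wt_coe]
  repeat rw [Finset.sum_insert (by decide)]
  rw [Finset.sum_singleton]; ring

end R10aux


open R10aux

/-- The 3-cosystole of `R₁₀` equals `6/5`; in particular `R₁₀` has five cocircuits
of size four such that every element lies in exactly two of them and any three of
them satisfy the non-inclusion property. -/
theorem stmt19 (M : Matroid (Fin 10)) (hE : M.E = Set.univ)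
    (hIndep : ∀ I : Set (Fin 10),
      M.Indep I ↔ LinearIndependent (ZMod 2)
        (fun e : I => fun i : Fin 5 => R10matrix i (e : Fin 10))) :
    M.sys3 = 6 / 5 ∧
    ∃ C : Fin 5 → Set (Fin 10),
      (∀ i, M.Cocircuit (C i)) ∧
      (∀ i, (C i).ncard = 4) ∧
      (∀ e : Fin 10, {i : Fin 5 | e ∈ C i}.ncard = 2) ∧
      (∀ i j k : Fin 5, i ≠ j → i ≠ k → j ≠ k → NonIncl (C i) (C j) (C k)) := by
  classical
  have hcocirc : ∀ i, M.Cocircuit ↑(Cfin i) := fun i => cocircC hE hIndep i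
  have hnonincl : ∀ i j k : Fin 5, i ≠ j → i ≠ k → j ≠ k →
      NonIncl (↑(Cfin i) : Set (Fin 10)) ↑(Cfin j) ↑(Cfin k) := by
    intro i j k hij hik hjk
    refine ⟨?_, ?_, ?_⟩ <;> intro hsub <;> rw [← Finset.coe_union, Finset.coe_subset] at hsub
    · exact d6 i j k hij hik hjk hsub
    · exact d6 j i k hij.symm hjk hik hsub
    · exact d6 k i j hik.symm hjk.symm hij hsub
  set S : (Fin 10 → ℝ) → Set ℝ := fun μ => {s | ∃ C₁ C₂ C₃, M.Cocircuit C₁ ∧ M.Cocircuit C₂ ∧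
    M.Cocircuit C₃ ∧ NonIncl C₁ C₂ C₃ ∧ s = wt μ C₁ + wt μ C₂ + wt μ C₃} with hSdef
  have hsys3wt : ∀ μ, M.sys3wt μ = sInf (S μ) := fun μ => rfl
  have hmemS : ∀ (μ : Fin 10 → ℝ) (i j k : Fin 5), i ≠ j → i ≠ k → j ≠ k →
      (wt μ ↑(Cfin i) + wt μ ↑(Cfin j) + wt μ ↑(Cfin k)) ∈ S μ :=
    fun μ i j k hij hik hjk =>
      ⟨_, _, _, hcocirc i, hcocirc j, hcocirc k, hnonincl i j k hij hik hjk, rfl⟩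
  have hbdd : ∀ μ : Fin 10 → ℝ, (∀ e, 0 ≤ μ e) → BddBelow (S μ) := by
    intro μ hμ
    refine ⟨0, ?_⟩
    rintro s ⟨C₁, C₂, C₃, -, -, -, -, rfl⟩
    have := wt_nonneg hμ C₁
    have := wt_nonneg hμ C₂
    have := wt_nonneg hμ C₃
    linarith
  have hub : ∀ μ, M.IsProb μ → M.sys3wt μ ≤ 6 / 5 := by
    rintro μ ⟨hμ0, -, hμ1⟩
    rw [hE, wt_univ] at hμ1
    have hw0 := wtC0 μ
    have hw1 := wtC1 μ
    have hw2 := wtC2 μ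
    have hw3 := wtC3 μ
    have hw4 := wtC4 μ
    have htri : ∃ i j k : Fin 5, i ≠ j ∧ i ≠ k ∧ j ≠ k ∧
        wt μ ↑(Cfin i) + wt μ ↑(Cfin j) + wt μ ↑(Cfin k) ≤ 6 / 5 := by
      by_contra hcon
      push_neg at hcon
      have h012 := hcon 0 1 2 (by decide) (by decide) (by decide)
      have h013 := hcon 0 1 3 (by decide) (by decide) (by decide)
      have h014 := hcon 0 1 4 (by decide) (by decide) (by decide)
      have h023 := hcon 0 2 3 (by decide) (by decide) (by decide)
      have h024 := hcon 0 2 4 (by decide) (by decide) (by decide)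
      have h034 := hcon 0 3 4 (by decide) (by decide) (by decide)
      have h123 := hcon 1 2 3 (by decide) (by decide) (by decide)
      have h124 := hcon 1 2 4 (by decide) (by decide) (by decide)
      have h134 := hcon 1 3 4 (by decide) (by decide) (by decide)
      have h234 := hcon 2 3 4 (by decide) (by decide) (by decide)
      linarith
    obtain ⟨i, j, k, hij, hik, hjk, hle⟩ := htri
    rw [hsys3wt]
    exact le_trans (csInf_le (hbdd μ hμ0) (hmemS μ i j k hij hik hjk)) hle
  have hprob : M.IsProb (fun _ => (1:ℝ)/10) := by
    refine ⟨fun _ => by norm_num, fun e he => ?_, by rw [hE, wt_univ]; norm_num⟩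
    · rw [hE] at he
      exact absurd (Set.mem_univ e) he
  have hlb : (6:ℝ) / 5 ≤ M.sys3wt (fun _ => (1:ℝ)/10) := by
    rw [hsys3wt]
    apply le_csInf ⟨_, hmemS _ 0 1 2 (by decide) (by decide) (by decide)⟩
    rintro s ⟨C₁, C₂, C₃, h1, h2, h3, -, rfl⟩
    have g : ∀ C : Set (Fin 10), M.Cocircuit C → (4:ℝ)/10 ≤ wt (fun _ => (1:ℝ)/10) C := by
      intro C hC
      rw [wt_uniform]
      have h4 := cocirc_ncard hE hIndep hC
      have h4' : (4:ℝ) ≤ (C.ncard : ℝ) := by exact_mod_cast h4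
      linarith
    have := g C₁ h1
    have := g C₂ h2
    have := g C₃ h3
    linarith
  have hwt0 : M.sys3wt (fun _ => (1:ℝ)/10) = 6 / 5 := le_antisymm (hub _ hprob) hlb
  have hsys3 : M.sys3 = sSup {t | ∃ μ, M.IsProb μ ∧ t = M.sys3wt μ} := rfl
  have hmemT : (6:ℝ)/5 ∈ {t | ∃ μ, M.IsProb μ ∧ t = M.sys3wt μ} := ⟨_, hprob, hwt0.symm⟩
  have hbddT : BddAbove {t | ∃ μ, M.IsProb μ ∧ t = M.sys3wt μ} := by
    refine ⟨6/5, ?_⟩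
    rintro t ⟨μ, hp, rfl⟩
    exact hub μ hp
  constructor
  · rw [hsys3]
    apply le_antisymm
    · apply csSup_le ⟨6/5, hmemT⟩
      rintro t ⟨μ, hp, rfl⟩
      exact hub μ hp
    · exact le_csSup hbddT hmemT
  · refine ⟨fun i => ↑(Cfin i), hcocirc, fun i => ?_, fun e => ?_, hnonincl⟩
    · rw [Set.ncard_coe_finset, d7 i]
    · have he : {i : Fin 5 | e ∈ (↑(Cfin i) : Set (Fin 10))} =
          ↑(Finset.univ.filter fun i => e ∈ Cfin i) := by
        ext i; simp
      rw [he, Set.ncard_coe_finset, d8 e]
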